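/- If f is a nonnegative almost periodic sequence on ℤ which is not identically zero, then its mean value is strictly positive: ⟨f⟩ > 0. -/

import Mathlib

/-! Compactness of the closure of the translates of `f` gives Bohr's property: for every `ε > 0`
there is `K` such that every interval of length `2K` contains an `ε`-almost period of `f`; it also
bounds `|f|` by some `C`. Shifting a window `[a, a + n)` by an almost period close to `b - a`
shows that the window sums satisfy `|S(a, n) - S(b, n)| ≤ n ε + 2 K C`, so the window averages
`S(a, n) / n` are Cauchy as `n → ∞` uniformly in the position `a`, and converge to a common
limit `μ`. With `ε = f n₀ / 2`, every window of length `2K + 1` contains a point `n₀ + τ` with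
`f (n₀ + τ) ≥ f n₀ / 2`, whence `μ ≥ f n₀ / (2 (2K + 1)) > 0`. -/

open scoped UniformConvergence

def TranslatesR (f : ℤ → ℝ) : Set (ℤ →ᵤ ℝ) :=
  {g | ∃ k : ℤ, g = UniformFun.ofFun (fun n => f (n + k))}

def AlmostPeriodicSeqR (f : ℤ → ℝ) : Prop :=
  IsCompact (closure (TranslatesR f))

open Filter Topology Uniformity Finset

def IsAlmostPeriod (f : ℤ → ℝ) (ε : ℝ) (τ : ℤ) : Prop :=
  ∀ n, |f (n + τ) - f n| ≤ ε

def AlmostPeriodsDense (f : ℤ → ℝ) (ε : ℝ) (K : ℕ) : Prop :=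
  ∀ a : ℤ, ∃ τ, |τ - a| ≤ K ∧ IsAlmostPeriod f ε τ

noncomputable def blockSum (f : ℤ → ℝ) (a : ℤ) (n : ℕ) : ℝ :=
  ∑ k ∈ Ico a (a + n), f k

noncomputable def blockAvg (f : ℤ → ℝ) (a : ℤ) (n : ℕ) : ℝ :=
  blockSum f a n / n

namespace AlmostPeriodicSeqR

variable {f : ℤ → ℝ}

theorem exists_almostPeriodsDense (hf : AlmostPeriodicSeqR f) {ε : ℝ} (hε : 0 < ε) :
    ∃ K : ℕ, AlmostPeriodsDense f ε K := by
  have hV : UniformFun.gen ℤ ℝ {p | dist p.1 p.2 < ε} ∈ 𝓤 (ℤ →ᵤ ℝ) :=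
    (UniformFun.hasBasis_uniformity ℤ ℝ).mem_of_mem (Metric.dist_mem_uniformity hε)
  obtain ⟨t, hts, htf, hcov⟩ :=
    totallyBounded_iff_subset.mp (hf.totallyBounded.subset subset_closure) _ hV
  have ht : ∀ y ∈ t, ∃ k : ℤ, y = UniformFun.ofFun (fun n => f (n + k)) := fun y hy => hts hy
  choose! k hk using ht
  refine ⟨htf.toFinset.sup fun y => (k y).natAbs, fun a => ?_⟩
  obtain ⟨y, hy, hay⟩ := Set.mem_iUnion₂.mp (hcov ⟨a, rfl⟩)
  refine ⟨a - k y, ?_, fun n => ?_⟩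
  · rw [sub_sub_cancel_left, abs_neg, Int.abs_eq_natAbs]
    exact_mod_cast le_sup (f := fun y => (k y).natAbs) (htf.mem_toFinset.mpr hy)
  · rw [hk y hy] at hay
    have hn : dist (f (n - k y + a)) (f (n - k y + k y)) < ε := hay (n - k y)
    rw [show n - k y + a = n + (a - k y) by ring, sub_add_cancel, Real.dist_eq] at hn
    exact hn.le

theorem exists_abs_le (hf : AlmostPeriodicSeqR f) : ∃ C, ∀ n, |f n| ≤ C := by
  obtain ⟨C, hC⟩ := IsCompact.exists_bound_of_continuousOn hf
    (UniformFun.uniformContinuous_eval ℝ (0 : ℤ)).continuous.continuousOn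
  exact ⟨C, fun n => by simpa using hC _ (subset_closure ⟨n, rfl⟩)⟩

end AlmostPeriodicSeqR

section blockSum

variable {f : ℤ → ℝ} {ε C : ℝ} {K : ℕ}

theorem blockSum_add (f : ℤ → ℝ) (a : ℤ) (m n : ℕ) :
    blockSum f a (m + n) = blockSum f a m + blockSum f (a + m) n := by
  rw [blockSum, blockSum, blockSum, ← sum_union (Ico_disjoint_Ico_consecutive _ _ _),
    Ico_union_Ico_eq_Ico (by omega) (by omega), Nat.cast_add, add_assoc]

theorem blockSum_mul (f : ℤ → ℝ) (a : ℤ) (q n : ℕ) :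
    blockSum f a (q * n) = ∑ j ∈ range q, blockSum f (a + j * n) n := by
  induction q with
  | zero => simp [blockSum]
  | succ q ih => rw [add_mul, one_mul, blockSum_add, ih, sum_range_succ, Nat.cast_mul]

theorem blockSum_add_right (f : ℤ → ℝ) (a τ : ℤ) (n : ℕ) :
    blockSum f (a + τ) n = blockSum (fun k => f (k + τ)) a n := by
  rw [blockSum, blockSum, sum_Ico_add', add_right_comm]

theorem blockSum_sub (f g : ℤ → ℝ) (a : ℤ) (n : ℕ) :
    blockSum f a n - blockSum g a n = blockSum (fun k => f k - g k) a n :=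
  (sum_sub_distrib ..).symm

theorem abs_blockSum_le (hC : ∀ k, |f k| ≤ C) (a : ℤ) (n : ℕ) : |blockSum f a n| ≤ n * C :=
  calc |blockSum f a n| ≤ ∑ k ∈ Ico a (a + n), |f k| := abs_sum_le_sum_abs _ _
    _ ≤ ∑ _k ∈ Ico a (a + n), C := sum_le_sum fun k _ => hC k
    _ = n * C := by simp

theorem IsAlmostPeriod.abs_blockSum_add_sub_le {τ : ℤ} (hτ : IsAlmostPeriod f ε τ) (a : ℤ)
    (n : ℕ) : |blockSum f (a + τ) n - blockSum f a n| ≤ n * ε := by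
  rw [blockSum_add_right, blockSum_sub]
  exact abs_blockSum_le hτ a n

theorem abs_blockSum_sub_le_of_abs_sub_le (hC : ∀ k, |f k| ≤ C) {a b : ℤ} (hab : |a - b| ≤ K)
    (n : ℕ) : |blockSum f a n - blockSum f b n| ≤ 2 * K * C := by
  wlog hle : a ≤ b generalizing a b
  · rw [abs_sub_comm]
    exact this (by rwa [abs_sub_comm]) (by omega)
  obtain ⟨d, rfl⟩ := Int.le.dest hle
  have hdK : (d : ℝ) ≤ K := by
    rw [sub_add_cancel_left, abs_neg, Nat.abs_cast] at hab
    exact_mod_cast hab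
  have hC0 : 0 ≤ C := (abs_nonneg _).trans (hC 0)
  -- both sides come from splitting `blockSum f a (d + n)` in the two possible orders
  have hswap : blockSum f a n - blockSum f (a + d) n = blockSum f a d - blockSum f (a + n) d := by
    have h := blockSum_add f a d n
    rw [add_comm d n, blockSum_add] at h
    linarith
  rw [hswap]
  calc |blockSum f a d - blockSum f (a + n) d|
      ≤ |blockSum f a d| + |blockSum f (a + n) d| := abs_sub _ _
    _ ≤ d * C + d * C := add_le_add (abs_blockSum_le hC _ _) (abs_blockSum_le hC _ _)
    _ ≤ 2 * K * C := by nlinarith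

theorem AlmostPeriodsDense.abs_blockSum_sub_le (hK : AlmostPeriodsDense f ε K)
    (hC : ∀ k, |f k| ≤ C) (a b : ℤ) (n : ℕ) :
    |blockSum f a n - blockSum f b n| ≤ n * ε + 2 * K * C := by
  obtain ⟨τ, hτ, hper⟩ := hK (b - a)
  have h₁ := hper.abs_blockSum_add_sub_le a n
  have h₂ := abs_blockSum_sub_le_of_abs_sub_le hC (a := a + τ) (b := b)
    (by rwa [show a + τ - b = τ - (b - a) by ring]) n
  calc |blockSum f a n - blockSum f b n|
      ≤ |blockSum f (a + τ) n - blockSum f a n| + |blockSum f (a + τ) n - blockSum f b n| := by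
        rw [abs_sub_comm (blockSum f (a + τ) n)]; exact abs_sub_le _ _ _
    _ ≤ n * ε + 2 * K * C := add_le_add h₁ h₂

theorem AlmostPeriodsDense.abs_blockAvg_mul_sub_le (hK : AlmostPeriodsDense f ε K)
    (hC : ∀ k, |f k| ≤ C) (a b : ℤ) {q n : ℕ} (hq : 0 < q) (hn : 0 < n) :
    |blockAvg f a (q * n) - blockAvg f b n| ≤ ε + 2 * K * C / n := by
  have hn' : (0 : ℝ) < n := Nat.cast_pos.mpr hn
  have hqn : (0 : ℝ) < q * n := mul_pos (Nat.cast_pos.mpr hq) hn'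
  have key : blockAvg f a (q * n) - blockAvg f b n
      = (∑ j ∈ range q, (blockSum f (a + j * n) n - blockSum f b n)) / (q * n) := by
    rw [sum_sub_distrib, sum_const, card_range, nsmul_eq_mul, blockAvg, blockAvg, blockSum_mul]
    push_cast
    field_simp
  rw [key, abs_div, abs_of_pos hqn, div_le_iff₀ hqn]
  calc |∑ j ∈ range q, (blockSum f (a + j * n) n - blockSum f b n)|
      ≤ ∑ _j ∈ range q, (n * ε + 2 * K * C) :=
        (abs_sum_le_sum_abs _ _).trans (sum_le_sum fun j _ => hK.abs_blockSum_sub_le hC _ _ n)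
    _ = (ε + 2 * K * C / n) * (q * n) := by
        rw [sum_const, card_range, nsmul_eq_mul]
        field_simp

theorem AlmostPeriodsDense.abs_blockAvg_sub_le (hK : AlmostPeriodsDense f ε K)
    (hC : ∀ k, |f k| ≤ C) (a b : ℤ) {n m : ℕ} (hn : 0 < n) (hm : 0 < m) :
    |blockAvg f a n - blockAvg f b m| ≤ 2 * ε + 2 * K * C / n + 2 * K * C / m := by
  have h₁ := hK.abs_blockAvg_mul_sub_le hC a a hm hn
  have h₂ := hK.abs_blockAvg_mul_sub_le hC a b hn hm
  rw [mul_comm] at h₂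
  calc |blockAvg f a n - blockAvg f b m|
      ≤ |blockAvg f a (m * n) - blockAvg f a n| + |blockAvg f a (m * n) - blockAvg f b m| := by
        rw [abs_sub_comm (blockAvg f a (m * n))]; exact abs_sub_le _ _ _
    _ ≤ 2 * ε + 2 * K * C / n + 2 * K * C / m := by linarith

theorem AlmostPeriodsDense.le_blockSum (hK : AlmostPeriodsDense f ε K) (hpos : ∀ n, 0 ≤ f n)
    (n₀ a : ℤ) : f n₀ - ε ≤ blockSum f a (2 * K + 1) := by
  obtain ⟨τ, hτ, hper⟩ := hK (a + K - n₀)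
  have hmem : n₀ + τ ∈ Ico a (a + (2 * K + 1 : ℕ)) := by
    rw [mem_Ico]
    push_cast
    have := abs_le.mp hτ
    omega
  calc f n₀ - ε ≤ f (n₀ + τ) := by linarith [(abs_le.mp (hper n₀)).1]
    _ ≤ blockSum f a (2 * K + 1) := single_le_sum (fun k _ => hpos k) hmem

end blockSum

namespace AlmostPeriodicSeqR

variable {f : ℤ → ℝ}

theorem exists_dist_blockAvg_lt (hf : AlmostPeriodicSeqR f) {δ : ℝ} (hδ : 0 < δ) :
    ∃ N, ∀ a b n m, N ≤ n → N ≤ m → dist (blockAvg f a n) (blockAvg f b m) < δ := by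
  obtain ⟨K, hK⟩ := hf.exists_almostPeriodsDense (show 0 < δ / 8 by positivity)
  obtain ⟨C, hC⟩ := hf.exists_abs_le
  obtain ⟨N, hN⟩ := eventually_atTop.mp
    (((tendsto_const_div_atTop_nhds_zero_nat (2 * K * C)).eventually
      (ge_mem_nhds (show (0 : ℝ) < δ / 8 by positivity))).and (eventually_gt_atTop 0))
  refine ⟨N, fun a b n m hn hm => ?_⟩
  obtain ⟨hn', hn0⟩ := hN n hn
  obtain ⟨hm', hm0⟩ := hN m hm
  rw [Real.dist_eq]
  linarith [hK.abs_blockAvg_sub_le hC a b hn0 hm0]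

theorem tendsto_blockAvg (hf : AlmostPeriodicSeqR f) :
    ∃ μ, Tendsto (fun p : ℤ × ℕ => blockAvg f p.1 p.2) (⊤ ×ˢ atTop) (𝓝 μ) := by
  refine cauchy_map_iff_exists_tendsto.mp (Metric.cauchy_iff.mpr ⟨inferInstance, fun δ hδ => ?_⟩)
  obtain ⟨N, hN⟩ := hf.exists_dist_blockAvg_lt hδ
  refine ⟨_, image_mem_map (prod_mem_prod univ_mem (Ici_mem_atTop N)), ?_⟩
  rintro _ ⟨⟨a, n⟩, ⟨-, hn⟩, rfl⟩ _ ⟨⟨b, m⟩, ⟨-, hm⟩, rfl⟩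
  exact hN a b n m hn hm

theorem pos_of_tendsto_blockAvg (hf : AlmostPeriodicSeqR f) (hpos : ∀ n, 0 ≤ f n) {n₀ : ℤ}
    (hn₀ : 0 < f n₀) {μ : ℝ}
    (hμ : Tendsto (fun p : ℤ × ℕ => blockAvg f p.1 p.2) (⊤ ×ˢ atTop) (𝓝 μ)) : 0 < μ := by
  obtain ⟨K, hK⟩ := hf.exists_almostPeriodsDense (half_pos hn₀)
  set W := 2 * K + 1
  have hW : (0 : ℝ) < W := by positivity
  have hlow : ∀ q : ℕ, 0 < q → f n₀ / 2 / W ≤ blockAvg f 0 (q * W) := by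
    intro q hq
    have hsum : q • (f n₀ / 2) ≤ blockSum f 0 (q * W) := by
      have hblock (j : ℕ) : f n₀ / 2 ≤ blockSum f (0 + j * W) W := by
        linarith [hK.le_blockSum hpos n₀ (0 + j * W)]
      rw [blockSum_mul]
      simpa using card_nsmul_le_sum (range q) _ _ fun j _ => hblock j
    have hqW : (0 : ℝ) < q * W := mul_pos (Nat.cast_pos.mpr hq) hW
    rw [nsmul_eq_mul] at hsum
    rw [blockAvg, Nat.cast_mul, le_div_iff₀ hqW]
    calc f n₀ / 2 / W * (q * W) = q * (f n₀ / 2) := by field_simp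
      _ ≤ _ := hsum
  have hwin : Tendsto (fun q : ℕ => ((0 : ℤ), q * W)) atTop (⊤ ×ˢ atTop) :=
    tendsto_top.prodMk
      (tendsto_atTop_mono (fun q => Nat.le_mul_of_pos_right q (2 * K).succ_pos) tendsto_id)
  have hc : 0 < f n₀ / 2 / W := by positivity
  exact hc.trans_le (ge_of_tendsto (hμ.comp hwin) ((eventually_gt_atTop 0).mono hlow))

end AlmostPeriodicSeqR

theorem blockSum_neg_eq_sum_Icc (f : ℤ → ℝ) (N : ℕ) :
    blockSum f (-N) (2 * N + 1) = ∑ k ∈ Icc (-N : ℤ) N, f k := by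
  rw [blockSum]
  congr 1
  ext k
  simp only [mem_Ico, mem_Icc]
  push_cast
  omega

/-- A nonnegative almost periodic sequence on ℤ which is not identically zero
has strictly positive mean value. -/
theorem stmt_3 (f : ℤ → ℝ) (hf : AlmostPeriodicSeqR f)
    (hpos : ∀ n, 0 ≤ f n) (n₀ : ℤ) (hn₀ : 0 < f n₀) :
    ∃ μ : ℝ, 0 < μ ∧ Filter.Tendsto
      (fun N : ℕ => (2 * (N : ℝ) + 1)⁻¹ * ∑ k ∈ Finset.Icc (-(N : ℤ)) (N : ℤ), f k)
      Filter.atTop (nhds μ) := by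
  obtain ⟨μ, hμ⟩ := hf.tendsto_blockAvg
  refine ⟨μ, hf.pos_of_tendsto_blockAvg hpos hn₀ hμ, ?_⟩
  have hwin : Tendsto (fun N : ℕ => ((-N : ℤ), 2 * N + 1)) atTop (⊤ ×ˢ atTop) :=
    tendsto_top.prodMk (tendsto_atTop_mono (fun N => show N ≤ 2 * N + 1 by omega) tendsto_id)
  refine (hμ.comp hwin).congr fun N => ?_
  rw [Function.comp_apply, blockAvg, blockSum_neg_eq_sum_Icc, div_eq_inv_mul]
  push_cast
  rfl
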